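/- arXiv:1001.0136 — 2 statements merged into one kernel-verified Lean document; each statement's English description precedes it below -/
import Mathlib

section
/- Let G be a threshold graph with self-loops with block sizes k_1,…,k_m, l_1,…,l_m, where additionally m ≥ 2 and k_1 = 0. Set J = 2m−2 and let B̃ be the loop-reduced matrix built from the sequence (a_1,…,a_J) = (k_m, l_{m−1}, k_{m−1}, l_{m−2}, …, k_2, l_1). Then the characteristic polynomial of the adjacency matrix Ã_G equals x^{n − J} · det(x·I_J − B̃), and 0 is not an eigenvalue of B̃. In particular, the eigenvalue 0 of Ã_G has algebraic multiplicity exactly n − (2m−2). -/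
open Finset Polynomial

/-- The adjacency matrix of a threshold graph *with self-loops* determined by a block
assignment `b : Fin n → ℕ × Bool`, where `b u = (i, true)` means `u ∈ V_i^{(1)}` and
`b u = (i, false)` means `u ∈ V_i^{(0)}`.  Two (not necessarily distinct) vertices `u, v`
are adjacent iff (after possibly swapping them) `u` lies in some `V_i^{(1)}` and `v` lies
in some `V_j^{(1)}`, or in some `V_j^{(0)}` with `j < i`; in particular every vertex of a
`V^{(1)}` block carries a self-loop. -/
def thrAdjLoop {n : ℕ} (b : Fin n → ℕ × Bool) : Matrix (Fin n) (Fin n) ℝ :=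
  Matrix.of fun u v =>
    if (((b u).2 = true ∧ ((b v).2 = true ∨ ((b v).2 = false ∧ (b v).1 < (b u).1))) ∨
         ((b v).2 = true ∧ ((b u).2 = true ∨ ((b u).2 = false ∧ (b u).1 < (b v).1))))
    then (1 : ℝ) else 0

/-- The loop-reduced matrix built from a sequence `a_1, …, a_J` (0-indexed here):
`B̃[i,j] = a_j` if (`j` is odd and `j ≤ i`) or (`i` is odd and `i ≤ j`) in 1-based
indexing, and `B̃[i,j] = 0` otherwise. -/
def loopReducedMatrix {J : ℕ} (a : Fin J → ℝ) : Matrix (Fin J) (Fin J) ℝ :=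
  Matrix.of fun i j =>
    if ((j : ℕ) % 2 = 0 ∧ (j : ℕ) ≤ (i : ℕ)) ∨ ((i : ℕ) % 2 = 0 ∧ (i : ℕ) ≤ (j : ℕ))
    then a j else 0

/-- The sequence `(a_1, …, a_J) = (k_m, l_{m-1}, k_{m-1}, l_{m-2}, …)` (1-based),
written 0-indexed: `a j = k (m - j/2)` for even `j` and `a j = l (m - (j+1)/2)` for odd `j`. -/
def aseq (m : ℕ) (k l : ℕ → ℕ) (J : ℕ) : Fin J → ℝ :=
  fun j => if (j : ℕ) % 2 = 0 then (k (m - (j : ℕ) / 2) : ℝ) else (l (m - ((j : ℕ) + 1) / 2) : ℝ)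

/-! Index the blocks `V_i^{(1)}` (`2 ≤ i ≤ m`) and `V_i^{(0)}` (`i < m`) by `j < J = 2m - 2`.
Let `P` be the `n × J` block-membership matrix and `Q` the `J × n` matrix of adjacencies
between blocks and vertices. Every other vertex lies in `V_m^{(0)}` (as `V_1^{(1)}` is empty)
and is isolated, so `Ã_G = P Q`; and `Q P = B̃`, column `j` picking up the size `a_j` of block
`j`. Hence `χ(Ã_G) = X^{n-J} χ(B̃)`. Since all `a_j ≠ 0`, the zero pattern of `B̃` lets one
solve `B̃ v = 0` coordinate by coordinate, so `B̃` is nonsingular. -/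

open Matrix

theorem Matrix.isRoot_charpoly_zero_iff {R : Type*} [CommRing R] {ι : Type*} [Fintype ι]
    [DecidableEq ι] (M : Matrix ι ι R) : M.charpoly.IsRoot 0 ↔ M.det = 0 := by
  rw [zero_isRoot_iff_coeff_zero_eq_zero, M.det_eq_sign_charpoly_coeff,
    (isUnit_neg_one.pow _).mul_right_eq_zero]

theorem Polynomial.rootMultiplicity_zero_X_pow_mul {R : Type*} [CommRing R]
    {p : R[X]} (hp : ¬ p.IsRoot 0) (r : ℕ) : (X ^ r * p).rootMultiplicity 0 = r := by
  have hp0 : p ≠ 0 := fun h => hp (by simp [h])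
  rw [mul_comm, ← sub_zero X, ← map_zero C, rootMultiplicity_mul_X_sub_C_pow hp0,
    rootMultiplicity_eq_zero hp, zero_add]

theorem Matrix.eq_zero_of_mulVec_eq_zero_of_row {R : Type*} [Semiring R] [NoZeroDivisors R]
    {ι : Type*} [Fintype ι] {M : Matrix ι ι R} {v : ι → R} (hv : M *ᵥ v = 0)
    {i j : ι} (hij : M i j ≠ 0) (h : ∀ q ≠ j, M i q ≠ 0 → v q = 0) : v j = 0 := by
  have hrow : M i j * v j = 0 := by
    rw [← Pi.zero_apply (M := fun _ => R) i, ← hv, mulVec, dotProduct, Finset.sum_eq_single j]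
    · intro q _ hq
      by_cases hM : M i q = 0
      · rw [hM, zero_mul]
      · rw [h q hq hM, mul_zero]
    · simp
  exact (mul_eq_zero.1 hrow).resolve_left hij

section LoopReduced

def LoopReducedSupport (i j : ℕ) : Prop :=
  (j % 2 = 0 ∧ j ≤ i) ∨ (i % 2 = 0 ∧ i ≤ j)

variable {J : ℕ} {a : Fin J → ℝ}

theorem loopReducedMatrix_apply_of_support {i j : Fin J} (h : LoopReducedSupport i j) :
    loopReducedMatrix a i j = a j := if_pos h

theorem support_of_loopReducedMatrix_apply_ne_zero {i j : Fin J}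
    (h : loopReducedMatrix a i j ≠ 0) : LoopReducedSupport i j :=
  of_not_not fun hs => h (if_neg hs)

theorem loopReducedMatrix_det_ne_zero (hJ : Even J) (ha : ∀ j, a j ≠ 0) :
    (loopReducedMatrix a).det ≠ 0 := by
  rw [Ne, ← exists_mulVec_eq_zero_iff]
  rintro ⟨v, hv0, hv⟩
  obtain ⟨J', rfl⟩ := hJ
  -- Odd rows determine the even coordinates from left to right, then even rows the odd
  -- coordinates from right to left.
  have heven : ∀ j : Fin (J' + J'), (j : ℕ) % 2 = 0 → v j = 0 := by
    intro j
    induction j using WellFoundedLT.induction with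
    | _ j ih =>
      intro hj
      have hrow : (j : ℕ) + 1 < J' + J' := by omega
      refine eq_zero_of_mulVec_eq_zero_of_row hv (i := ⟨j + 1, hrow⟩) ?_ fun q hq hMq => ?_
      · rw [loopReducedMatrix_apply_of_support (Or.inl ⟨hj, by simp⟩)]
        exact ha j
      · have hsupp := support_of_loopReducedMatrix_apply_ne_zero hMq
        simp only [LoopReducedSupport] at hsupp
        have hqj : (q : ℕ) ≠ j := Fin.val_ne_of_ne hq
        exact ih q (by simp only [Fin.lt_def]; omega) (by omega)
  have hodd : ∀ j : Fin (J' + J'), (j : ℕ) % 2 = 1 → v j = 0 := by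
    intro j
    induction j using WellFoundedGT.induction with
    | _ j ih =>
      intro hj
      have hrow : (j : ℕ) - 1 < J' + J' := by omega
      refine eq_zero_of_mulVec_eq_zero_of_row hv (i := ⟨j - 1, hrow⟩) ?_ fun q hq hMq => ?_
      · rw [loopReducedMatrix_apply_of_support (Or.inr ⟨by simp; omega, by simp⟩)]
        exact ha j
      · have hsupp := support_of_loopReducedMatrix_apply_ne_zero hMq
        simp only [LoopReducedSupport] at hsupp
        have hqj : (q : ℕ) ≠ j := Fin.val_ne_of_ne hq
        rcases Nat.mod_two_eq_zero_or_one q with hq2 | hq2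
        · exact heven q hq2
        · exact ih q (by simp only [Fin.lt_def]; omega) hq2
  refine hv0 (funext fun j => ?_)
  rcases Nat.mod_two_eq_zero_or_one j with hj | hj
  · exact heven j hj
  · exact hodd j hj

end LoopReduced

theorem card_le_card_of_fibers_nonempty {V ι β : Type*} [Fintype V] [Fintype ι]
    {f : V → β} {g : ι → β} (hg : Function.Injective g)
    (hne : ∀ i, ∃ v, f v = g i) : Fintype.card ι ≤ Fintype.card V := by
  choose s hs using hne
  exact Fintype.card_le_of_injective s fun i j h => hg (by rw [← hs i, ← hs j, h])

section BlockMatrices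

variable {V ι β α : Type*} [DecidableEq β] [Semiring α]

def memberMatrix (f : V → β) (g : ι → β) : Matrix V ι α :=
  of fun v i => if f v = g i then 1 else 0

def relMatrix (r : β → β → Prop) [DecidableRel r] (g : ι → β) (f : V → β) : Matrix ι V α :=
  of fun i v => if r (g i) (f v) then 1 else 0

variable (r : β → β → Prop) [DecidableRel r] {f : V → β} {g : ι → β}

theorem memberMatrix_mul_relMatrix [Fintype ι] (hg : Function.Injective g)
    (hf : ∀ u v, r (f u) (f v) → f u ∈ Set.range g) :
    (memberMatrix f g : Matrix V ι α) * (relMatrix r g f : Matrix ι V α) =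
      (of fun u v => if r (f u) (f v) then 1 else 0 : Matrix V V α) := by
  ext u v
  rw [Matrix.mul_apply, of_apply]
  by_cases huv : r (f u) (f v)
  · obtain ⟨i, hi⟩ := hf u v huv
    rw [Finset.sum_eq_single i]
    · simp [memberMatrix, relMatrix, ← hi]
    · intro q _ hq
      have : f u ≠ g q := fun h => hq (hg (h.symm.trans hi.symm))
      simp [memberMatrix, this]
    · simp
  · refine (Finset.sum_eq_zero fun q _ => ?_).trans (if_neg huv).symm
    by_cases hq : f u = g q
    · simp [memberMatrix, relMatrix, ← hq, huv]
    · simp [memberMatrix, hq]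

theorem relMatrix_mul_memberMatrix [Fintype V] :
    (relMatrix r g f : Matrix ι V α) * (memberMatrix f g : Matrix V ι α) = (of fun i j =>
      (#{v | f v = g j} : α) * if r (g i) (g j) then 1 else 0 : Matrix ι ι α) := by
  ext i j
  rw [Matrix.mul_apply, of_apply, ← nsmul_eq_mul, ← Finset.sum_const, Finset.sum_filter]
  refine Finset.sum_congr rfl fun v _ => ?_
  by_cases hv : f v = g j
  · simp [memberMatrix, relMatrix, hv]
  · simp [memberMatrix, hv]

end BlockMatrices

section ThresholdGraph

def ThresholdAdj (p q : ℕ × Bool) : Prop :=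
  (p.2 = true ∧ (q.2 = true ∨ (q.2 = false ∧ q.1 < p.1))) ∨
    (q.2 = true ∧ (p.2 = true ∨ (p.2 = false ∧ p.1 < q.1)))

instance : DecidableRel ThresholdAdj := fun p q => by unfold ThresholdAdj; infer_instance

/-- The block whose size `aseq` lists at position `j`. -/
def loopBlock (m j : ℕ) : ℕ × Bool :=
  if j % 2 = 0 then (m - j / 2, true) else (m - (j + 1) / 2, false)

variable {m : ℕ}

theorem eq_of_loopBlock_eq {p q : ℕ} (hp : p < 2 * m) (hq : q < 2 * m)
    (h : loopBlock m p = loopBlock m q) : p = q := by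
  unfold loopBlock at h
  split_ifs at h <;> grind

theorem thresholdAdj_loopBlock_iff {p q : ℕ} (hp : p < 2 * m) (hq : q < 2 * m) :
    ThresholdAdj (loopBlock m p) (loopBlock m q) ↔ LoopReducedSupport p q := by
  unfold ThresholdAdj loopBlock LoopReducedSupport
  split_ifs <;> simp <;> grind

theorem mem_range_loopBlock {p : ℕ × Bool} (h1 : 1 ≤ p.1) (hm : p.1 ≤ m) (hp1 : p ≠ (1, true))
    (hpm : p ≠ (m, false)) : p ∈ Set.range fun j : Fin (2 * m - 2) => loopBlock m j := by
  obtain ⟨i, _ | _⟩ := p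
  · have : i ≠ m := by rintro rfl; exact hpm rfl
    refine ⟨⟨2 * (m - i) - 1, by grind⟩, ?_⟩
    simp only [loopBlock] at h1 hm ⊢
    split_ifs <;> simp <;> omega
  · have : i ≠ 1 := by rintro rfl; exact hp1 rfl
    refine ⟨⟨2 * (m - i), by grind⟩, ?_⟩
    simp only [loopBlock] at h1 hm ⊢
    split_ifs <;> simp <;> omega

theorem thresholdAdj_false_left_iff {i : ℕ} {q : ℕ × Bool} :
    ThresholdAdj (i, false) q ↔ q.2 = true ∧ i < q.1 := by
  simp [ThresholdAdj]

variable {k l : ℕ → ℕ}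

theorem aseq_pos (hk : ∀ i, 2 ≤ i → i ≤ m → 1 ≤ k i) (hl : ∀ i, 1 ≤ i → i + 1 ≤ m → 1 ≤ l i)
    (j : Fin (2 * m - 2)) : 0 < aseq m k l (2 * m - 2) j := by
  have := j.isLt
  unfold aseq
  split_ifs
  · exact_mod_cast hk _ (by omega) (by omega)
  · exact_mod_cast hl _ (by omega) (by omega)

variable {n : ℕ} {b : Fin n → ℕ × Bool}

theorem card_filter_eq_loopBlock
    (hcard1 : ∀ i ∈ Finset.Icc 1 m, #{v | b v = (i, true)} = k i)
    (hcard0 : ∀ i ∈ Finset.Icc 1 m, #{v | b v = (i, false)} = l i) (j : Fin (2 * m - 2)) :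
    (#{v | b v = loopBlock m j} : ℝ) = aseq m k l (2 * m - 2) j := by
  have := j.isLt
  unfold loopBlock aseq
  split_ifs
  · rw [hcard1 _ (Finset.mem_Icc.2 ⟨by omega, by omega⟩)]
  · rw [hcard0 _ (Finset.mem_Icc.2 ⟨by omega, by omega⟩)]

theorem relMatrix_mul_memberMatrix_loopBlock
    (hcard1 : ∀ i ∈ Finset.Icc 1 m, #{v | b v = (i, true)} = k i)
    (hcard0 : ∀ i ∈ Finset.Icc 1 m, #{v | b v = (i, false)} = l i) :
    (relMatrix ThresholdAdj (loopBlock m ·) b : Matrix (Fin (2 * m - 2)) (Fin n) ℝ) *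
      (memberMatrix b (loopBlock m ·) : Matrix (Fin n) (Fin (2 * m - 2)) ℝ) =
      loopReducedMatrix (aseq m k l (2 * m - 2)) := by
  rw [relMatrix_mul_memberMatrix]
  ext i j
  simp only [of_apply, card_filter_eq_loopBlock hcard1 hcard0,
    thresholdAdj_loopBlock_iff (m := m) (p := i) (q := j) (by omega) (by omega),
    loopReducedMatrix, LoopReducedSupport, mul_ite, mul_one, mul_zero]

end ThresholdGraph

theorem thresholdGraphLoops_charpoly_factorization_k1_zero_general
    (m n : ℕ) (k l : ℕ → ℕ)
    (hk : ∀ i, 2 ≤ i → i ≤ m → 1 ≤ k i)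
    (hl : ∀ i, 1 ≤ i → i + 1 ≤ m → 1 ≤ l i)
    (hm2 : 2 ≤ m) (hk1 : k 1 = 0)
    (b : Fin n → ℕ × Bool)
    (hb : ∀ v, (b v).1 ∈ Finset.Icc 1 m)
    (hcard1 : ∀ i ∈ Finset.Icc 1 m,
      (Finset.univ.filter fun v => b v = (i, true)).card = k i)
    (hcard0 : ∀ i ∈ Finset.Icc 1 m,
      (Finset.univ.filter fun v => b v = (i, false)).card = l i) :
    (thrAdjLoop b).charpoly =
        X ^ (n - (2 * m - 2)) *
        (loopReducedMatrix (aseq m k l (2 * m - 2))).charpoly ∧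
    ¬ (loopReducedMatrix (aseq m k l (2 * m - 2))).charpoly.IsRoot 0 ∧
    ((thrAdjLoop b).charpoly.rootMultiplicity 0 = n - (2 * m - 2)) := by
  have hg : Function.Injective fun j : Fin (2 * m - 2) => loopBlock m j :=
    fun p q h => Fin.ext (eq_of_loopBlock_eq (by omega) (by omega) h)
  have hno1 : ∀ v, b v ≠ (1, true) := by
    simpa [hk1] using hcard1 1 (Finset.mem_Icc.2 ⟨le_rfl, by omega⟩)
  have hAB : (memberMatrix b (loopBlock m ·) : Matrix (Fin n) (Fin (2 * m - 2)) ℝ) *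
      (relMatrix ThresholdAdj (loopBlock m ·) b : Matrix (Fin (2 * m - 2)) (Fin n) ℝ) =
      thrAdjLoop b := by
    refine memberMatrix_mul_relMatrix _ hg fun u v huv => ?_
    have hu := Finset.mem_Icc.1 (hb u)
    refine mem_range_loopBlock hu.1 hu.2 (hno1 u) fun hum => ?_
    rw [hum, thresholdAdj_false_left_iff] at huv
    have hv := Finset.mem_Icc.1 (hb v)
    omega
  have hJn : 2 * m - 2 ≤ n := by
    simpa using card_le_card_of_fibers_nonempty (f := b) hg fun j => by
      have hpos := (aseq_pos hk hl j).trans_eq (card_filter_eq_loopBlock hcard1 hcard0 j).symm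
      obtain ⟨v, hv⟩ := Finset.card_pos.1 (by exact_mod_cast hpos)
      exact ⟨v, (Finset.mem_filter.1 hv).2⟩
  have hfact : (thrAdjLoop b).charpoly =
      X ^ (n - (2 * m - 2)) * (loopReducedMatrix (aseq m k l (2 * m - 2))).charpoly := by
    rw [← hAB, ← relMatrix_mul_memberMatrix_loopBlock hcard1 hcard0,
      charpoly_mul_comm_of_le _ _ (by simpa using hJn)]
    simp
  have hroot : ¬ (loopReducedMatrix (aseq m k l (2 * m - 2))).charpoly.IsRoot 0 :=
    (isRoot_charpoly_zero_iff _).not.2 <|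
      loopReducedMatrix_det_ne_zero ⟨m - 1, by omega⟩ fun j => (aseq_pos hk hl j).ne'
  exact ⟨hfact, hroot, hfact ▸ rootMultiplicity_zero_X_pow_mul hroot _⟩

/-- for a threshold graph with self-loops with `m ≥ 2` and `k_1 = 0`, the characteristic
polynomial of the adjacency matrix factors as `x^{n-J} det(x I - B̃)` where `B̃` is the
loop-reduced matrix of size `J = 2m-2` built from `(k_m, l_{m-1}, …, k_2, l_1)`; moreover
`0` is not an eigenvalue of `B̃`, so the algebraic multiplicity of the eigenvalue `0` of
`Ã_G` is exactly `n - (2m-2)`. -/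
theorem thresholdGraphLoops_charpoly_factorization_k1_zero
    (m n : ℕ) (k l : ℕ → ℕ) (hm : 1 ≤ m)
    (hk : ∀ i, 2 ≤ i → i ≤ m → 1 ≤ k i)
    (hl : ∀ i, 1 ≤ i → i + 1 ≤ m → 1 ≤ l i)
    (hm2 : 2 ≤ m) (hk1 : k 1 = 0)
    (hn : n = ∑ i ∈ Finset.Icc 1 m, (k i + l i))
    (b : Fin n → ℕ × Bool)
    (hb : ∀ v, (b v).1 ∈ Finset.Icc 1 m)
    (hcard1 : ∀ i ∈ Finset.Icc 1 m,
      (Finset.univ.filter fun v => b v = (i, true)).card = k i)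
    (hcard0 : ∀ i ∈ Finset.Icc 1 m,
      (Finset.univ.filter fun v => b v = (i, false)).card = l i) :
    (thrAdjLoop b).charpoly =
        X ^ (n - (2 * m - 2)) *
        (loopReducedMatrix (aseq m k l (2 * m - 2))).charpoly ∧
    ¬ (loopReducedMatrix (aseq m k l (2 * m - 2))).charpoly.IsRoot 0 ∧
    ((thrAdjLoop b).charpoly.rootMultiplicity 0 = n - (2 * m - 2)) :=
  thresholdGraphLoops_charpoly_factorization_k1_zero_general m n k l hk hl hm2 hk1 b hb hcard1
    hcard0
end

section
/- Let 0 < p < 1 and let X_1, X_2, … be i.i.d. random variables with P(X_i = 1) = p and P(X_i = 0) = 1 − p. For each n ≥ 2 let A^{(n)} be the random n×n symmetric 0/1 matrix with A^{(n)}[i,j] = 1 if and only if i ≠ j and X_i + X_j ≥ 1. Then, almost surely, the empirical spectral distribution of A^{(n)} converges weakly, as n → ∞, to p·δ_{−1} + (1 − p)·δ_0. -/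
/-!
The adjacency matrix of `G_n(p)` is that of the complete split graph with clique
`s = {i | X i ≥ 1}`. Its columns indexed by `s` coincide after adding the identity, and its
columns indexed by `sᶜ` coincide, so `-1` and `0` are roots of the characteristic polynomial
of multiplicities at least `|s| - 1` and `n - |s| - 1`. Hence all but at most two of the `n`
roots are `-1` or `0`, and the empirical spectral distribution is within `O(1/n)` of
`(|s|/n) δ_{-1} + (1 - |s|/n) δ_0`. By the strong law of large numbers `|s|/n → p`
almost surely.
-/

open MeasureTheory ProbabilityTheory Filter

/-- The empirical spectral distribution of an `n × n` real matrix: the uniform probability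
measure on the roots of its characteristic polynomial, counted with multiplicity.  (For a
real symmetric matrix the characteristic polynomial splits over `ℝ`, so these roots are
exactly the eigenvalues with algebraic multiplicity.) -/
noncomputable def esd {n : ℕ} (A : Matrix (Fin n) (Fin n) ℝ) : Measure ℝ :=
  (n : ENNReal)⁻¹ • (A.charpoly.roots.map (fun lam => Measure.dirac lam)).sum

namespace Matrix

theorem rank_le_card_compl_add_one_of_col_eq {m n R : Type*} [Fintype m] [Fintype n]
    [DecidableEq n] [CommRing R] [StrongRankCondition R] (A : Matrix m n R) (S : Finset n)
    (c : m → R) (h : ∀ j ∈ S, A.col j = c) : A.rank ≤ Sᶜ.card + 1 := by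
  classical
  have hcols : Set.range A.col ⊆ ↑(insert c (Sᶜ.image A.col)) := by
    rintro _ ⟨j, rfl⟩
    by_cases hj : j ∈ S
    · simp [h j hj]
    · simpa using Or.inr ⟨j, hj, rfl⟩
  calc A.rank = Module.finrank R (Submodule.span R (Set.range A.col)) :=
        A.rank_eq_finrank_span_cols
    _ ≤ Module.finrank R (Submodule.span R ↑(insert c (Sᶜ.image A.col))) :=
        Submodule.finrank_mono (Submodule.span_mono hcols)
    _ ≤ (insert c (Sᶜ.image A.col)).card := finrank_span_finset_le_card _
    _ ≤ Sᶜ.card + 1 := (Finset.card_insert_le _ _).trans (by grw [Finset.card_image_le])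

theorem card_le_count_roots_charpoly_add_one {n K : Type*} [Fintype n] [DecidableEq n] [Field K]
    [DecidableEq K] (A : Matrix n n K) (μ : K) (S : Finset n) (c : n → K)
    (h : ∀ j ∈ S, (A - μ • 1).col j = c) :
    S.card ≤ A.charpoly.roots.count μ + 1 := by
  have hrank := (A - μ • 1).rank_le_card_compl_add_one_of_col_eq S c h
  have hker : Module.End.eigenspace (toLin' A) μ = LinearMap.ker (A - μ • 1).mulVecLin := by
    rw [Module.End.eigenspace_def]
    congr 1
    ext v
    simp
  have hgeom := LinearMap.finrank_eigenspace_le (toLin' A) μ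
  rw [charpoly_toLin', hker] at hgeom
  have hnullity := LinearMap.finrank_range_add_finrank_ker (A - μ • 1).mulVecLin
  rw [Module.finrank_fintype_fun_eq_card] at hnullity
  have hcompl := Finset.card_compl_add_card S
  rw [Polynomial.count_roots]
  unfold rank at hrank
  omega

end Matrix

namespace Multiset

theorem sum_map_eq_count_mul_add {α : Type*} [DecidableEq α] (m : Multiset α) (f : α → ℝ)
    (a : α) : (m.map f).sum = m.count a * f a + ((m.filter (· ≠ a)).map f).sum := by
  conv_lhs => rw [← filter_add_not (· = a) m, filter_eq' m a]
  simp

theorem abs_sum_map_le_card_mul {α : Type*} (m : Multiset α) {f : α → ℝ} {C : ℝ}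
    (hf : ∀ x, |f x| ≤ C) : |(m.map f).sum| ≤ card m * C :=
  calc |(m.map f).sum| ≤ (m.map fun x => |f x|).sum := by
        simpa [map_map] using abs_sum_le_sum_abs (s := m.map f)
    _ ≤ (m.map fun _ => C).sum := sum_map_le_sum_map _ _ fun x _ => hf x
    _ = card m * C := by simp

theorem abs_sum_map_sub_le {α : Type*} [DecidableEq α] (m : Multiset α) {f : α → ℝ}
    {C : ℝ} (hf : ∀ x, |f x| ≤ C) {a b : α} (hab : a ≠ b) {k l : ℕ}
    (hk : k ≤ m.count a + 1) (hl : l ≤ m.count b + 1) (hm : card m ≤ k + l) :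
    |(m.map f).sum - (k * f a + l * f b)| ≤ 4 * C := by
  set rest := (m.filter (· ≠ a)).filter (· ≠ b)
  have hcount : (m.filter (· ≠ a)).count b = m.count b := count_filter_of_pos hab.symm
  have hsum : ∀ g : α → ℝ,
      (m.map g).sum = m.count a * g a + m.count b * g b + (rest.map g).sum := fun g => by
    rw [sum_map_eq_count_mul_add m g a, sum_map_eq_count_mul_add _ g b, hcount, add_assoc]
  have hcard : (card m : ℝ) = m.count a + m.count b + card rest := by
    simpa using hsum fun _ => 1
  have hk' : (k : ℝ) ≤ m.count a + 1 := by exact_mod_cast hk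
  have hl' : (l : ℝ) ≤ m.count b + 1 := by exact_mod_cast hl
  have hm' : (card m : ℝ) ≤ k + l := by exact_mod_cast hm
  have hrest : (card rest : ℝ) ≤ 2 := by linarith
  have hC : 0 ≤ C := (abs_nonneg _).trans (hf a)
  have hda : |(m.count a - k : ℝ) * f a| ≤ C := by
    rw [abs_mul]
    exact (mul_le_of_le_one_left (abs_nonneg _) (abs_le.2 ⟨by linarith, by linarith⟩)).trans
      (hf a)
  have hdb : |(m.count b - l : ℝ) * f b| ≤ C := by
    rw [abs_mul]
    exact (mul_le_of_le_one_left (abs_nonneg _) (abs_le.2 ⟨by linarith, by linarith⟩)).trans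
      (hf b)
  calc |(m.map f).sum - (k * f a + l * f b)|
      = |(m.count a - k : ℝ) * f a + (m.count b - l : ℝ) * f b + (rest.map f).sum| := by
        rw [hsum f]; ring_nf
    _ ≤ C + C + card rest * C :=
        (abs_add_three ..).trans (by gcongr; exact abs_sum_map_le_card_mul rest hf)
    _ ≤ 4 * C := by nlinarith

end Multiset

theorem integrable_multiset_sum_dirac {α : Type*} [MeasurableSpace α]
    [MeasurableSingletonClass α] (m : Multiset α) (f : α → ℝ) :
    Integrable f (m.map Measure.dirac).sum := by
  induction m using Multiset.induction_on with
  | empty => simp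
  | cons a m ih => simpa using (integrable_dirac enorm_lt_top).add_measure ih

theorem integral_multiset_sum_dirac {α : Type*} [MeasurableSpace α]
    [MeasurableSingletonClass α] (m : Multiset α) (f : α → ℝ) :
    ∫ x, f x ∂(m.map Measure.dirac).sum = (m.map f).sum := by
  induction m using Multiset.induction_on with
  | empty => simp
  | cons a m ih =>
    simp only [Multiset.map_cons, Multiset.sum_cons]
    rw [integral_add_measure (integrable_dirac enorm_lt_top)
      (integrable_multiset_sum_dirac m f), integral_dirac, ih]

theorem integral_esd {n : ℕ} (A : Matrix (Fin n) (Fin n) ℝ) (f : ℝ → ℝ) :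
    ∫ x, f x ∂esd A = (n : ℝ)⁻¹ * (A.charpoly.roots.map f).sum := by
  rw [esd, integral_smul_measure, integral_multiset_sum_dirac]
  simp

/-- The adjacency matrix of the complete split graph with clique `s` and independent set
`sᶜ`. -/
def completeSplitAdjMatrix {ι : Type*} [DecidableEq ι] (R : Type*) [Zero R] [One R]
    (s : Finset ι) : Matrix ι ι R :=
  Matrix.of fun i j => if i ≠ j ∧ (i ∈ s ∨ j ∈ s) then 1 else 0

section completeSplitAdjMatrix

variable {ι : Type*} [DecidableEq ι] {s : Finset ι}

theorem col_completeSplitAdjMatrix_sub_neg_one_of_mem {R : Type*} [Ring R] {j : ι}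
    (hj : j ∈ s) : (completeSplitAdjMatrix R s - (-1 : R) • 1).col j = fun _ => 1 := by
  ext i
  by_cases hij : i = j
  · simp [completeSplitAdjMatrix, hij]
  · simp [completeSplitAdjMatrix, hij, hj, Matrix.one_apply_ne hij]

theorem col_completeSplitAdjMatrix_sub_zero_of_notMem {R : Type*} [Ring R] {j : ι}
    (hj : j ∉ s) :
    (completeSplitAdjMatrix R s - (0 : R) • 1).col j = fun i => if i ∈ s then 1 else 0 := by
  ext i
  by_cases hi : i ∈ s
  · simp [completeSplitAdjMatrix, hi, hj, show i ≠ j by rintro rfl; exact hj hi]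
  · simp [completeSplitAdjMatrix, hi, hj]

variable [Fintype ι] {K : Type*} [Field K] [DecidableEq K]

theorem card_le_count_neg_one_roots_charpoly_completeSplitAdjMatrix :
    s.card ≤ (completeSplitAdjMatrix K s).charpoly.roots.count (-1) + 1 :=
  Matrix.card_le_count_roots_charpoly_add_one _ _ s _
    fun _ => col_completeSplitAdjMatrix_sub_neg_one_of_mem

theorem card_compl_le_count_zero_roots_charpoly_completeSplitAdjMatrix :
    sᶜ.card ≤ (completeSplitAdjMatrix K s).charpoly.roots.count 0 + 1 :=
  Matrix.card_le_count_roots_charpoly_add_one _ _ sᶜ _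
    fun _ hj => col_completeSplitAdjMatrix_sub_zero_of_notMem (Finset.mem_compl.1 hj)

theorem of_one_le_add_eq_completeSplitAdjMatrix {R : Type*} [Zero R] [One R] (x : ι → ℕ) :
    (Matrix.of fun i j => if i ≠ j ∧ 1 ≤ x i + x j then (1 : R) else 0)
      = completeSplitAdjMatrix R (Finset.univ.filter fun i => 1 ≤ x i) := by
  have hpos : ∀ a b : ℕ, 1 ≤ a + b ↔ 1 ≤ a ∨ 1 ≤ b := by omega
  ext i j
  simp [completeSplitAdjMatrix, hpos]

end completeSplitAdjMatrix

theorem abs_integral_esd_completeSplitAdjMatrix_sub_le {n : ℕ} (hn : 0 < n)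
    (s : Finset (Fin n)) {f : ℝ → ℝ} {C : ℝ} (hf : ∀ x, |f x| ≤ C) :
    |∫ x, f x ∂esd (completeSplitAdjMatrix ℝ s)
        - (s.card / n * f (-1) + (1 - s.card / n) * f 0)| ≤ 4 * C / n := by
  have hroots :
      Multiset.card (completeSplitAdjMatrix ℝ s).charpoly.roots ≤ s.card + sᶜ.card := by
    rw [Finset.card_add_card_compl]
    exact (Polynomial.card_roots' _).trans (by simp [Matrix.charpoly_natDegree_eq_dim])
  have hbound := Multiset.abs_sum_map_sub_le _ hf (by norm_num : (-1 : ℝ) ≠ 0)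
    card_le_count_neg_one_roots_charpoly_completeSplitAdjMatrix
    card_compl_le_count_zero_roots_charpoly_completeSplitAdjMatrix hroots
  have hcompl : (sᶜ.card : ℝ) = n - s.card := by
    rw [eq_sub_iff_add_eq', ← Nat.cast_add, Finset.card_add_card_compl, Fintype.card_fin]
  have hn' : (0 : ℝ) < n := by exact_mod_cast hn
  have hrescale : (n : ℝ)⁻¹ * ((completeSplitAdjMatrix ℝ s).charpoly.roots.map f).sum
        - (s.card / n * f (-1) + (1 - s.card / n) * f 0)
      = (n : ℝ)⁻¹ * (((completeSplitAdjMatrix ℝ s).charpoly.roots.map f).sum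
        - (s.card * f (-1) + sᶜ.card * f 0)) := by
    rw [hcompl]
    field_simp
  rw [integral_esd, hrescale, abs_mul, abs_of_pos (inv_pos.2 hn'), div_eq_inv_mul]
  gcongr

theorem identDistrib_indicator_one {Ω : Type*} [MeasurableSpace Ω] {μ : Measure Ω}
    [IsFiniteMeasure μ] {E F : Set Ω} (hE : MeasurableSet E) (hF : MeasurableSet F)
    (h : μ E = μ F) : IdentDistrib (E.indicator (1 : Ω → ℝ)) (F.indicator 1) μ μ := by
  refine ⟨(measurable_one.indicator hE).aemeasurable, (measurable_one.indicator hF).aemeasurable,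
    Measure.ext fun t ht => ?_⟩
  rw [Measure.map_apply (measurable_one.indicator hE) ht,
    Measure.map_apply (measurable_one.indicator hF) ht]
  classical
  simp only [Pi.one_def, Set.indicator_const_preimage_eq_union]
  split_ifs <;> simp [measure_compl, hE, hF, h]

theorem ae_tendsto_card_filter_div {Ω β : Type*} [MeasurableSpace Ω] {μ : Measure Ω}
    [IsFiniteMeasure μ] [MeasurableSpace β] {X : ℕ → Ω → β} (hX : ∀ i, Measurable (X i))
    (hindep : Pairwise fun i j => IndepFun (X i) (X j) μ) {P : β → Prop} [DecidablePred P]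
    (hP : MeasurableSet {x | P x}) (hident : ∀ i, μ {ω | P (X i ω)} = μ {ω | P (X 0 ω)}) :
    ∀ᵐ ω ∂μ, Tendsto
      (fun n : ℕ => ((Finset.univ.filter fun i : Fin n => P (X i ω)).card : ℝ) / n) atTop
      (nhds (μ.real {ω | P (X 0 ω)})) := by
  have hE : ∀ i, MeasurableSet {ω | P (X i ω)} := fun i => hX i hP
  set Y : ℕ → Ω → ℝ := fun i => {ω | P (X i ω)}.indicator 1
  have hY : Pairwise fun i j => IndepFun (Y i) (Y j) μ := fun i j hij =>
    (hindep hij).comp (measurable_one.indicator hP) (measurable_one.indicator hP)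
  have hlaw := strong_law_ae_real Y ((integrable_const 1).indicator (hE 0)) hY
    fun i => identDistrib_indicator_one (hE i) (hE 0) (hident i)
  filter_upwards [hlaw] with ω hω
  rw [integral_indicator_one (hE 0)] at hω
  refine hω.congr fun n => ?_
  rw [← Fin.sum_univ_eq_sum_range (fun i => Y i ω)]
  simp [Y, Set.indicator_apply, Finset.sum_boole]

/-- for the binary threshold model `G_n(p)` (i.i.d. Bernoulli(p) hidden
variables `X_i`, vertices `i ≠ j` adjacent iff `X_i + X_j ≥ 1`), the empirical spectral
distribution of the adjacency matrix converges weakly, almost surely, to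
`p·δ_{-1} + (1-p)·δ_0`. -/
theorem binaryThresholdModel_esd_tendsto
    {Ω : Type*} [MeasureSpace Ω] [IsProbabilityMeasure (ℙ : Measure Ω)]
    (p : ℝ) (hp0 : 0 < p) (hp1 : p < 1) (X : ℕ → Ω → ℕ)
    (hmeas : ∀ i, Measurable (X i))
    (hindep : iIndepFun X ℙ)
    (hdist : ∀ i, ℙ {ω | X i ω = 1} = ENNReal.ofReal p ∧
                  ℙ {ω | X i ω = 0} = ENNReal.ofReal (1 - p)) :
    ∀ᵐ ω ∂(ℙ : Measure Ω), ∀ f : BoundedContinuousFunction ℝ ℝ,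
      Tendsto
        (fun n : ℕ => ∫ x, f x ∂ esd (Matrix.of fun i j : Fin n =>
          if i ≠ j ∧ 1 ≤ X i ω + X j ω then (1 : ℝ) else 0))
        atTop
        (nhds (p * f (-1) + (1 - p) * f 0)) := by
  have hprob : ∀ i, ℙ {ω | 1 ≤ X i ω} = ENNReal.ofReal p := fun i => by
    have hcompl : {ω | 1 ≤ X i ω} = {ω | X i ω = 0}ᶜ := by
      ext; simp [Nat.one_le_iff_ne_zero]
    have hzero : MeasurableSet {ω | X i ω = 0} := hmeas i (measurableSet_singleton 0)
    rw [hcompl, prob_compl_eq_one_sub hzero, (hdist i).2,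
      ← ENNReal.ofReal_one, ← ENNReal.ofReal_sub _ (sub_nonneg.2 hp1.le), sub_sub_cancel]
  have hfreq := ae_tendsto_card_filter_div hmeas (fun i j hij => hindep.indepFun hij)
    (measurableSet_Ici (a := 1)) fun i => by rw [hprob, hprob]
  rw [measureReal_def, hprob, ENNReal.toReal_ofReal hp0.le] at hfreq
  filter_upwards [hfreq] with ω hω f
  have hlim := (hω.mul_const (f (-1))).add
    (((tendsto_const_nhds (x := (1 : ℝ))).sub hω).mul_const (f 0))
  refine hlim.congr_dist (squeeze_zero' (Eventually.of_forall fun _ => dist_nonneg) ?_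
    (tendsto_const_div_atTop_nhds_zero_nat (4 * ‖f‖)))
  filter_upwards [eventually_gt_atTop 0] with n hn
  rw [Real.dist_eq, abs_sub_comm, of_one_le_add_eq_completeSplitAdjMatrix fun i : Fin n => X i ω]
  exact abs_integral_esd_completeSplitAdjMatrix_sub_le hn _ fun x =>
    (Real.norm_eq_abs (f x)).symm.trans_le (f.norm_coe_le_norm x)
end
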